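/- arXiv:2411.15079 — 14 statements merged into one kernel-verified Lean document; each statement's English description precedes it below -/
import Mathlib

section
/- If u = (u0, u1, u2) is a triple of positive integers satisfying (u0+u1+u2)^2 = a*u0*u1*u2 for a positive integer a, then the triple (u0, u1, a*u0*u1 - 2*u0 - 2*u1 - u2) also consists of positive integers and satisfies the same equation. -/
theorem mutation_is_solution (a u0 u1 u2 : ℤ)
    (ha : 0 < a) (h0 : 0 < u0) (h1 : 0 < u1) (h2 : 0 < u2)
    (heq : (u0 + u1 + u2)^2 = a * u0 * u1 * u2) :
    0 < a * u0 * u1 - 2 * u0 - 2 * u1 - u2 ∧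
    (u0 + u1 + (a * u0 * u1 - 2 * u0 - 2 * u1 - u2))^2 =
      a * u0 * u1 * (a * u0 * u1 - 2 * u0 - 2 * u1 - u2) := by
  constructor
  · have key : u2 * (a * u0 * u1 - 2 * u0 - 2 * u1 - u2) = (u0 + u1)^2 := by ring_nf; nlinarith [heq]
    have hpos : 0 < u2 * (a * u0 * u1 - 2 * u0 - 2 * u1 - u2) := by
      rw [key]; positivity
    nlinarith [hpos]
  · nlinarith [heq, sq_nonneg (u0 + u1 + u2)]
end

section
/- For any positive integer solution (u0,u1,u2) of (u0+u1+u2)^2 = a*u0*u1*u2 with a a positive integer, the inequality 1/u0 + 1/u1 ≤ a/4 holds. -/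
theorem discr_ineq_one (a u0 u1 u2 : ℤ)
    (ha : 0 < a) (h0 : 0 < u0) (h1 : 0 < u1) (h2 : 0 < u2)
    (heq : (u0 + u1 + u2)^2 = a * u0 * u1 * u2) :
    (1 : ℚ) / (u0 : ℚ) + 1 / (u1 : ℚ) ≤ (a : ℚ) / 4 := by
  have hd : (a*u0*u1 - 2*(u0+u1))^2 - 4*(u0+u1)^2 ≥ 0 := by
    nlinarith [sq_nonneg (2*u2 - (a*u0*u1 - 2*(u0+u1)))]
  have key : 4*(u0+u1) ≤ a*u0*u1 := by
    by_contra hc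
    push_neg at hc
    have hpos : 0 < a*u0*u1 := by positivity
    nlinarith [hd, hc, hpos, h0, h1]
  have h0' : (0:ℚ) < (u0:ℚ) := by exact_mod_cast h0
  have h1' : (0:ℚ) < (u1:ℚ) := by exact_mod_cast h1
  have key' : (4:ℚ)*((u0:ℚ)+(u1:ℚ)) ≤ (a:ℚ)*(u0:ℚ)*(u1:ℚ) := by exact_mod_cast key
  rw [div_add_div _ _ (ne_of_gt h0') (ne_of_gt h1'), div_le_div_iff₀ (by positivity) (by norm_num)]
  nlinarith [key']
end

section
/- If (u0,u1,u2) is a positive integer solution of (u0+u1+u2)^2 = a*u0*u1*u2 with u0 ≤ u1 ≤ u2 and u2 ≤ u0 + u1, then a/4 ≤ 3/u2 + 1/u0. -/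
theorem discr_ineq_initial (a u0 u1 u2 : ℤ)
    (ha : 0 < a) (h0 : 0 < u0) (h1 : 0 < u1) (h2 : 0 < u2)
    (h01 : u0 ≤ u1) (h12 : u1 ≤ u2) (hinit : u2 ≤ u0 + u1)
    (heq : (u0 + u1 + u2)^2 = a * u0 * u1 * u2) :
    (a : ℚ) / 4 ≤ 3 / (u2 : ℚ) + 1 / (u0 : ℚ) := by
  have hs : (u0 + u1 + u2)^2 ≤ u1 * (4 * u2 + 12 * u0) := by
    nlinarith [mul_pos h0 h1, mul_pos h1 h2, sq_nonneg (u0 + u1 - u2),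
      mul_le_mul_of_nonneg_right hinit h2.le, mul_le_mul_of_nonneg_right h12 h2.le,
      mul_le_mul_of_nonneg_right h01 h0.le]
  have hkey : a * u0 * u2 ≤ 4 * u2 + 12 * u0 := by
    have := le_of_mul_le_mul_left (a := u1) (b := a * u0 * u2) (c := 4 * u2 + 12 * u0)
      (by nlinarith) h1
    linarith
  have h0q : (0:ℚ) < (u0:ℚ) := by exact_mod_cast h0
  have h2q : (0:ℚ) < (u2:ℚ) := by exact_mod_cast h2
  rw [div_add_div _ _ (ne_of_gt h2q) (ne_of_gt h0q), div_le_div_iff₀ (by norm_num) (mul_pos h2q h0q)]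
  have : (a:ℚ) * (u0:ℚ) * (u2:ℚ) ≤ 4 * (u2:ℚ) + 12 * (u0:ℚ) := by exact_mod_cast hkey
  ring_nf
  nlinarith
end

section
/- If a ≥ 10 is an integer, then the equation (u0+u1+u2)^2 = a*u0*u1*u2 has no solution in positive integers. -/
private lemma jump_base (a u0 u1 u2 : ℤ) (ha : 10 ≤ a)
    (h0 : 0 < u0) (h1 : 0 < u1) (h2 : 0 < u2)
    (h01 : u0 ≤ u1) (h12 : u1 ≤ u2) (h21 : u2 ≤ u0 + u1)
    (heq : (u0 + u1 + u2)^2 = a * u0 * u1 * u2) : False := by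
  have hb : 4 * (u0 + u1)^2 ≥ a * u0 * u1 * u2 := by
    nlinarith [mul_nonneg (by linarith : (0:ℤ) ≤ 3*(u0+u1)+u2) (by linarith : (0:ℤ) ≤ u0+u1-u2)]
  have hu0 : u0 = 1 := by
    nlinarith [mul_pos h1 h2, mul_pos h0 (mul_pos h1 h2),
      mul_le_mul_of_nonneg_right (show (10:ℤ) ≤ a from ha) (le_of_lt (mul_pos h0 (mul_pos h1 h2)))]
  subst hu0
  have : u2 = u1 ∨ u2 = u1 + 1 := by omega
  rcases this with h | h
  · subst h
    nlinarith [mul_nonneg (by linarith : (0:ℤ) ≤ u2 - 1) (by linarith : (0:ℤ) ≤ 6*u2+2),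
      mul_le_mul_of_nonneg_right ha (sq_nonneg u2)]
  · subst h
    nlinarith [mul_pos h1 (show (0:ℤ) < u1 + 1 by linarith),
      mul_le_mul_of_nonneg_right ha (le_of_lt (mul_pos h1 (show (0:ℤ) < u1 + 1 by linarith)))]

private lemma aux (a : ℤ) (ha : 10 ≤ a) : ∀ n : ℕ, ∀ u0 u1 u2 : ℤ, 0 < u0 → 0 < u1 → 0 < u2 →
    u0 ≤ u1 → u1 ≤ u2 → (u0 + u1 + u2)^2 = a * u0 * u1 * u2 → (u0 + u1 + u2).toNat ≤ n → False := by
  intro n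
  induction n with
  | zero => intro u0 u1 u2 h0 h1 h2 _ _ _ hle; omega
  | succ n ih =>
    intro u0 u1 u2 h0 h1 h2 h01 h12 heq hle
    set z := a * u0 * u1 - 2*(u0+u1) - u2 with hz
    have hzu2 : z * u2 = (u0+u1)^2 := by linear_combination u2 * hz - heq
    have hzpos : 0 < z := by
      rcases lt_trichotomy z 0 with h | h | h
      · nlinarith [sq_nonneg (u0+u1)]
      · nlinarith [sq_nonneg (u0+u1)]
      · exact h
    have heq' : (u0 + u1 + z)^2 = a * u0 * u1 * z := by
      linear_combination (2*(u0+u1) + z - a*u0*u1) * hz - hzu2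
    have hlt : z < u2 := by
      by_contra hge
      push_neg at hge
      have h21 : u2 ≤ u0 + u1 := by nlinarith
      exact jump_base a u0 u1 u2 ha h0 h1 h2 h01 h12 h21 heq
    rcases le_total z u0 with h | h
    · exact ih z u0 u1 hzpos h0 h1 h h01 (by linear_combination heq') (by omega)
    · rcases le_total z u1 with h' | h'
      · exact ih u0 z u1 h0 hzpos h1 h h' (by linear_combination heq') (by omega)
      · exact ih u0 u1 z h0 h1 hzpos h01 h' heq' (by omega)

theorem no_solution_a_ge_ten (a : ℤ) (ha : 10 ≤ a) :
    ¬ ∃ u0 u1 u2 : ℤ, 0 < u0 ∧ 0 < u1 ∧ 0 < u2 ∧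
      (u0 + u1 + u2)^2 = a * u0 * u1 * u2 := by
  rintro ⟨x, y, z, hx, hy, hz, heq⟩
  rcases le_total x y with h1 | h1 <;> rcases le_total y z with h2 | h2 <;>
    rcases le_total x z with h3 | h3
  · exact aux a ha (x+y+z).toNat x y z hx hy hz h1 h2 heq le_rfl
  · exact aux a ha (x+y+z).toNat x y z hx hy hz h1 h2 heq le_rfl
  · exact aux a ha (x+y+z).toNat x z y hx hz hy h3 (by linarith) (by linear_combination heq) (by omega)
  · exact aux a ha (x+y+z).toNat z x y hz hx hy h3 h1 (by linear_combination heq) (by omega)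
  · exact aux a ha (x+y+z).toNat y x z hy hx hz h1 h3 (by linear_combination heq) (by omega)
  · exact aux a ha (x+y+z).toNat y z x hy hz hx h2 h3 (by linear_combination heq) (by omega)
  · exact aux a ha (x+y+z).toNat z y x hz hy hx h2 h1 (by linear_combination heq) (by omega)
  · exact aux a ha (x+y+z).toNat z y x hz hy hx h2 h1 (by linear_combination heq) (by omega)
end

section
/- The equation (u0+u1+u2)^2 = 7*u0*u1*u2 has no solution in positive integers. -/
private lemma sort3 (x y z : ℤ) (hx : 0 < x) (hy : 0 < y) (hz : 0 < z)
    (h : (x + y + z)^2 = 7 * x * y * z) :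
    ∃ a b c : ℤ, 0 < a ∧ a ≤ b ∧ b ≤ c ∧ (a + b + c)^2 = 7 * a * b * c ∧
      a + b + c = x + y + z := by
  rcases le_total x y with h1 | h1 <;> rcases le_total y z with h2 | h2 <;>
    rcases le_total x z with h3 | h3
  · exact ⟨x, y, z, hx, h1, h2, by linear_combination h, by ring⟩
  · exact ⟨x, y, z, hx, h1, h2, by linear_combination h, by ring⟩
  · exact ⟨x, z, y, hx, h3, h2, by linear_combination h, by ring⟩
  · exact ⟨z, x, y, hz, h3, h1, by linear_combination h, by ring⟩
  · exact ⟨y, x, z, hy, h1, h3, by linear_combination h, by ring⟩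
  · exact ⟨y, z, x, hy, h2, h3, by linear_combination h, by ring⟩
  · exact ⟨x, z, y, hx, h3, h2, by linear_combination h, by ring⟩
  · exact ⟨z, y, x, hz, h2, h1, by linear_combination h, by ring⟩

theorem no_solution_a_eq_seven :
    ¬ ∃ u0 u1 u2 : ℤ, 0 < u0 ∧ 0 < u1 ∧ 0 < u2 ∧
      (u0 + u1 + u2)^2 = 7 * u0 * u1 * u2 := by
  rintro ⟨u0, u1, u2, h0, h1, h2, heq⟩
  set P : ℕ → Prop := fun n => ∃ a b c : ℤ, 0 < a ∧ a ≤ b ∧ b ≤ c ∧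
    (a + b + c)^2 = 7 * a * b * c ∧ a + b + c = (n : ℤ) with hP
  haveI : DecidablePred P := Classical.decPred P
  have hex : ∃ n, P n := by
    obtain ⟨a, b, c, ha, hab, hbc, he, hs⟩ := sort3 u0 u1 u2 h0 h1 h2 heq
    exact ⟨(u0 + u1 + u2).toNat, a, b, c, ha, hab, hbc, he, by
      rw [hs]; omega⟩
  obtain ⟨a, b, c, ha, hab, hbc, he, hs⟩ := Nat.find_spec hex
  have hb : 0 < b := lt_of_lt_of_le ha hab
  have hc : 0 < c := lt_of_lt_of_le hb hbc
  rcases le_or_gt c (a + b) with hcase | hcase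
  · -- small case: c ≤ a + b, with a ≤ b ≤ c
    have hprod : (a + b + c) * (a + b + c) ≤ (4 * b) * (3 * c) := by
      have h4 : a + b + c ≤ 4 * b := by linarith
      have h3 : a + b + c ≤ 3 * c := by linarith
      exact mul_le_mul h4 h3 (by linarith) (by linarith)
    have ha1 : a = 1 := by
      have h12 : 7 * a * b * c ≤ 12 * b * c := by nlinarith [he]
      have hbc' : 0 < b * c := mul_pos hb hc
      nlinarith
    subst ha1
    have : c = b ∨ c = b + 1 := by omega
    rcases this with rfl | rfl
    · -- (1+2c)^2 = 7 c^2
      have hble : c ≤ 1 := by nlinarith [sq_nonneg (c - 2)]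
      interval_cases c <;> norm_num at he
    · -- (2b+2)^2 = 7 b (b+1)
      have hble : b ≤ 1 := by nlinarith [sq_nonneg (b - 2)]
      interval_cases b <;> norm_num at he
  · -- descent: c > a + b, jump to w = 7ab - 2a - 2b - c
    obtain ⟨w, hw⟩ : ∃ w : ℤ, w = 7 * a * b - 2 * a - 2 * b - c := ⟨_, rfl⟩
    have hwc : w * c = (a + b)^2 := by rw [hw]; linear_combination -he
    have hwpos : 0 < w := by
      by_contra hneg
      push_neg at hneg
      have : w * c ≤ 0 := mul_nonpos_of_nonpos_of_nonneg hneg (le_of_lt hc)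
      nlinarith [sq_nonneg (a + b)]
    have hwlt : w < a + b := by
      have h1 : w * c < (a + b) * c := by nlinarith
      exact lt_of_mul_lt_mul_right h1 (le_of_lt hc)
    have hwe : (a + b + w)^2 = 7 * a * b * w := by
      rw [hw]; linear_combination he
    obtain ⟨a', b', c', ha', hab', hbc', he', hs'⟩ :=
      sort3 a b w ha hb hwpos hwe
    have hm : P (a + b + w).toNat := by
      exact ⟨a', b', c', ha', hab', hbc', he', by rw [hs']; omega⟩
    have hlt : (a + b + w).toNat < Nat.find hex := by omega
    exact Nat.find_min hex hlt hm
end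

section
/- If a positive integer a is such that (u0+u1+u2)^2 = a*u0*u1*u2 admits a solution in positive integers, then a ∈ {1,2,3,4,5,6,8,9}. -/
lemma sort3_s7 (u0 u1 u2 : ℤ) (h0 : 0 < u0) (h1 : 0 < u1) (h2 : 0 < u2) :
    ∃ v0 v1 v2 : ℤ, 0 < v0 ∧ 0 < v1 ∧ 0 < v2 ∧ v0 ≤ v1 ∧ v1 ≤ v2 ∧
      v0 + v1 + v2 = u0 + u1 + u2 ∧ v0 * v1 * v2 = u0 * u1 * u2 := by
  rcases le_total u0 u1 with h01 | h01 <;> rcases le_total u1 u2 with h12 | h12 <;>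
    rcases le_total u0 u2 with h02 | h02
  · exact ⟨u0, u1, u2, h0, h1, h2, by omega, by omega, by ring, by ring⟩
  · exact ⟨u0, u1, u2, h0, h1, h2, by omega, by omega, by ring, by ring⟩
  · exact ⟨u0, u2, u1, h0, h2, h1, by omega, by omega, by ring, by ring⟩
  · exact ⟨u2, u0, u1, h2, h0, h1, by omega, by omega, by ring, by ring⟩
  · exact ⟨u1, u0, u2, h1, h0, h2, by omega, by omega, by ring, by ring⟩
  · exact ⟨u1, u2, u0, h1, h2, h0, by omega, by omega, by ring, by ring⟩
  · exact ⟨u0, u1, u2, h0, h1, h2, by omega, by omega, by ring, by ring⟩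
  · exact ⟨u2, u1, u0, h2, h1, h0, by omega, by omega, by ring, by ring⟩

set_option maxHeartbeats 2000000 in
lemma core (a : ℤ) (ha : 0 < a) : ∀ n : ℕ, ∀ u0 u1 u2 : ℤ, 0 < u0 → 0 < u1 → 0 < u2 →
    (u0 + u1 + u2).toNat ≤ n → (u0 + u1 + u2)^2 = a * u0 * u1 * u2 → a ≤ 9 ∧ a ≠ 7 := by
  intro n
  induction n using Nat.strong_induction_on with
  | _ n IH =>
    intro x0 x1 x2 hx0 hx1 hx2 hn heqx
    obtain ⟨u0, u1, u2, h0, h1, h2, h01, h12, hsum, hprod⟩ := sort3_s7 x0 x1 x2 hx0 hx1 hx2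
    have heq : (u0 + u1 + u2)^2 = a * u0 * u1 * u2 := by
      rw [hsum]; linear_combination heqx - a * hprod
    have hn' : (u0 + u1 + u2).toNat ≤ n := by rw [hsum]; exact hn
    rcases le_or_gt u2 (u0 + u1) with hle | hlt
    · -- terminal case: derive a*u0 ≤ 9
      have key : (u2 - u1) * (u1 * u2 - (u0 + u1)^2) ≤ 0 := by
        apply mul_nonpos_of_nonneg_of_nonpos (by omega)
        nlinarith
      have hbound : (u0 + u1 + u2)^2 * u1 ≤ (u0 + 2*u1)^2 * u2 := by nlinarith [key]
      have hbound2 : a * u0 * u1^2 * u2 ≤ (u0 + 2*u1)^2 * u2 := by nlinarith [hbound, heq]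
      have hb2 : a * u0 * u1^2 * u2 ≤ 9 * (u1^2 * u2) := by
        nlinarith [mul_nonneg (mul_nonneg (sub_nonneg.2 h01)
          (by linarith : (0:ℤ) ≤ u0 + 5*u1)) h2.le]
      have h9 : a * u0 ≤ 9 := by
        by_contra hc
        push_neg at hc
        have h10 : (10:ℤ) ≤ a * u0 := Int.add_one_le_of_lt hc
        have hp : (0:ℤ) < u1^2 * u2 := by positivity
        linarith [mul_le_mul_of_nonneg_right h10 hp.le, hb2, hp]
      have ha9 : a ≤ 9 := by
        have := le_mul_of_one_le_right ha.le (show (1:ℤ) ≤ u0 by omega)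
        linarith
      refine ⟨ha9, ?_⟩
      intro h7
      subst h7
      have hu0 : u0 = 1 := by omega
      subst hu0
      have hu1sq : 3*u1^2 - 4*u1 - 1 ≤ 0 := by
        by_contra hc
        push_neg at hc
        have hm := mul_pos hc h2
        linarith [hbound2, hm]
      have hu1 : u1 = 1 := by
        by_contra hc
        have hc2 : (2:ℤ) ≤ u1 := by omega
        have := mul_le_mul_of_nonneg_left hc2 (show (0:ℤ) ≤ 3*u1 by linarith)
        linarith [hu1sq, hc2]
      subst hu1
      linarith [sq_nonneg (2*u2 - 3), heq]
    · -- descent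
      obtain ⟨v, hv⟩ : ∃ v : ℤ, v = a * u0 * u1 - 2*(u0 + u1) - u2 := ⟨_, rfl⟩
      have hprodv : u2 * v = (u0 + u1)^2 := by
        rw [hv]; linear_combination -heq
      have hspos : (0:ℤ) < (u0 + u1)^2 := by positivity
      have hvpos : 0 < v := by
        rcases le_or_gt v 0 with hc | hc
        · linarith [mul_nonpos_of_nonneg_of_nonpos h2.le hc, hprodv]
        · exact hc
      have hvlt : v < u2 := by
        have hs2 : (u0 + u1)^2 < u2^2 := by
          nlinarith [mul_pos (show (0:ℤ) < u2 - (u0+u1) by linarith)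
            (show (0:ℤ) < u2 + (u0+u1) by linarith)]
        have hm : u2 * v < u2 * u2 := by rw [hprodv, ← pow_two]; exact hs2
        exact lt_of_mul_lt_mul_left hm h2.le
      have heqv : (u0 + u1 + v)^2 = a * u0 * u1 * v := by
        rw [hv]; linear_combination heq
      have hlt' : (u0 + u1 + v).toNat < n := by omega
      exact IH _ hlt' u0 u1 v h0 h1 hvpos le_rfl heqv

theorem possible_a_values (a : ℤ) (ha : 0 < a)
    (h : ∃ u0 u1 u2 : ℤ, 0 < u0 ∧ 0 < u1 ∧ 0 < u2 ∧
      (u0 + u1 + u2)^2 = a * u0 * u1 * u2) :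
    a ∈ ({1, 2, 3, 4, 5, 6, 8, 9} : Set ℤ) := by
  obtain ⟨u0, u1, u2, h0, h1, h2, heq⟩ := h
  obtain ⟨h9, h7⟩ := core a ha (u0 + u1 + u2).toNat u0 u1 u2 h0 h1 h2 le_rfl heq
  simp only [Set.mem_insert_iff, Set.mem_singleton_iff]
  omega
end

section
/- Let (u0,u1,u2) be a positive integer solution of (u0+u1+u2)^2 = a*u0*u1*u2 and let u' = (u0, u1, a*u0*u1 - 2*u0 - 2*u1 - u2) be its one-step mutation. Then u0+u1+u2 < u0'+u1'+u2' if and only if u2 < u0 + u1, and the sums are equal if and only if u2 = u0 + u1. -/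
theorem norm_comparison (a u0 u1 u2 : ℤ)
    (ha : 0 < a) (h0 : 0 < u0) (h1 : 0 < u1) (h2 : 0 < u2)
    (heq : (u0 + u1 + u2)^2 = a * u0 * u1 * u2) :
    (u0 + u1 + u2 < u0 + u1 + (a * u0 * u1 - 2 * u0 - 2 * u1 - u2) ↔
      u2 < u0 + u1) ∧
    (u0 + u1 + u2 = u0 + u1 + (a * u0 * u1 - 2 * u0 - 2 * u1 - u2) ↔
      u2 = u0 + u1) := by
  have key : u2 * (a * u0 * u1 - 2 * u0 - 2 * u1 - u2) = (u0 + u1)^2 := by nlinarith [heq]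
  constructor
  · constructor
    · intro h; nlinarith [sq_nonneg (u2 - (u0 + u1)), sq_nonneg (u2 + (u0 + u1))]
    · intro h; nlinarith [sq_nonneg (u2 - (u0 + u1)), sq_nonneg (u2 + (u0 + u1))]
  · constructor
    · intro h
      have hle : u2 ≤ u0 + u1 := by nlinarith [sq_nonneg (u2 - (u0 + u1))]
      have hge : u0 + u1 ≤ u2 := by nlinarith [sq_nonneg (u2 - (u0 + u1))]
      linarith
    · intro h
      have : u2 * u2 = u2 * (a * u0 * u1 - 2 * u0 - 2 * u1 - u2) := by
        rw [key, h]; ring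
      have h2' : u2 = a * u0 * u1 - 2 * u0 - 2 * u1 - u2 := by
        have := mul_left_cancel₀ (ne_of_gt h2) this
        exact this
      linarith
end

section
/- Every positive integer solution of (u0+u1+u2)^2 = 4*u0*u1*u2 is of the form (2*v0, 2*v1, 2*v2) where (v0,v1,v2) is a positive integer solution of (v0+v1+v2)^2 = 8*v0*v1*v2. -/
lemma aux_two_le (a b c : ℤ) (hb : 0 < b) (hc : 0 < c) (ha : 0 < a)
    (heq : (a + b + c)^2 = 4 * a * b * c) : 2 ≤ a := by
  rcases (by omega : a = 1 ∨ 2 ≤ a) with h | h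
  · subst h; nlinarith [sq_nonneg (b - c)]
  · exact h

lemma aux_gt_sum (p q m : ℤ) (hp : 2 ≤ p) (hq : 3 ≤ q) (hm1 : p ≤ m) (hm2 : q ≤ m)
    (heq : (p + q + m)^2 = 4 * p * q * m) : p + q < m := by
  have hge : p + q ≤ m := by
    by_contra hlt
    push_neg at hlt
    have hs : 0 < p + q + m := by linarith
    have h1 : 4*p*q*(p+q+m) ≤ 3*(p+q+m)^2 := by nlinarith
    have h2 : 4*p*q < 6*(p+q) := by nlinarith
    have hp5 : p ≤ 5 := by nlinarith
    have hq5 : q ≤ 5 := by nlinarith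
    interval_cases p <;> interval_cases q <;> interval_cases m <;> omega
  rcases lt_or_eq_of_le hge with h | h
  · exact h
  · exfalso
    have hm0 : 0 < m := by linarith
    have hpq : m = p * q := by nlinarith
    nlinarith

lemma aux_jump (p q m : ℤ) (hp : 2 ≤ p) (hq : 3 ≤ q) (hm1 : p ≤ m) (hm2 : q ≤ m)
    (heq : (p + q + m)^2 = 4 * p * q * m) :
    0 < 4*p*q - 2*p - 2*q - m ∧ 4*p*q - 2*p - 2*q - m < m ∧
      (p + q + (4*p*q - 2*p - 2*q - m))^2 = 4 * p * q * (4*p*q - 2*p - 2*q - m) := by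
  have hgt : p + q < m := aux_gt_sum p q m hp hq hm1 hm2 heq
  have hm0 : 0 < m := by linarith
  have hprod : m * (4*p*q - 2*p - 2*q - m) = (p + q)^2 := by nlinarith
  have h1 : 0 < 4*p*q - 2*p - 2*q - m := by nlinarith [sq_nonneg (p+q)]
  refine ⟨h1, ?_, by linear_combination heq⟩
  nlinarith

lemma aux_key : ∀ n : ℕ, ∀ x y z : ℤ, x + y + z = (n : ℤ) →
    0 < x → 0 < y → 0 < z → Odd x → Odd y → Even z →
    (x + y + z)^2 = 4 * x * y * z → False := by
  intro n
  induction n using Nat.strong_induction_on with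
  | _ n ih =>
    intro x y z hn hx hy hz hox hoy hez heq
    have h2x : 2 ≤ x := aux_two_le x y z hy hz hx heq
    have h2y : 2 ≤ y := aux_two_le y z x hz hx hy (by linear_combination heq)
    have h2z : 2 ≤ z := aux_two_le z x y hx hy hz (by linear_combination heq)
    obtain ⟨a, ha⟩ := hox
    obtain ⟨b, hb⟩ := hoy
    obtain ⟨c, hc⟩ := hez
    have h3x : 3 ≤ x := by omega
    have h3y : 3 ≤ y := by omega
    rcases (by omega : (x ≤ z ∧ y ≤ z) ∨ (y ≤ x ∧ z ≤ x) ∨ (x ≤ y ∧ z ≤ y)) with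
      ⟨hh1, hh2⟩ | ⟨hh1, hh2⟩ | ⟨hh1, hh2⟩
    · obtain ⟨j1, j2, j3⟩ := aux_jump x y z h2x h3y hh1 hh2 heq
      exact ih (x + y + (4*x*y - 2*x - 2*y - z)).toNat (by omega)
        x y (4*x*y - 2*x - 2*y - z) (by omega) hx hy j1 ⟨a, ha⟩ ⟨b, hb⟩
        ⟨2*x*y - x - y - c, by linear_combination -hc⟩ j3
    · obtain ⟨j1, j2, j3⟩ := aux_jump z y x h2z h3y (by omega) hh1
        (by linear_combination heq)
      exact ih (z + y + (4*z*y - 2*z - 2*y - x)).toNat (by omega)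
        (4*z*y - 2*z - 2*y - x) y z (by omega) j1 hy hz
        ⟨2*z*y - z - y - a - 1, by linear_combination -ha⟩ ⟨b, hb⟩ ⟨c, hc⟩
        (by linear_combination j3)
    · obtain ⟨j1, j2, j3⟩ := aux_jump z x y h2z h3x (by omega) hh1
        (by linear_combination heq)
      exact ih (z + x + (4*z*x - 2*z - 2*x - y)).toNat (by omega)
        x (4*z*x - 2*z - 2*x - y) z (by omega) hx j1 hz
        ⟨a, ha⟩ ⟨2*z*x - z - x - b - 1, by linear_combination -hb⟩ ⟨c, hc⟩
        (by linear_combination j3)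

lemma aux_key' (x y z : ℤ) (hx : 0 < x) (hy : 0 < y) (hz : 0 < z)
    (hox : Odd x) (hoy : Odd y) (hez : Even z)
    (heq : (x + y + z)^2 = 4 * x * y * z) : False :=
  aux_key (x + y + z).toNat x y z (by omega) hx hy hz hox hoy hez heq

theorem solutions_four_are_doubled_eight (u0 u1 u2 : ℤ)
    (h0 : 0 < u0) (h1 : 0 < u1) (h2 : 0 < u2)
    (heq : (u0 + u1 + u2)^2 = 4 * u0 * u1 * u2) :
    ∃ v0 v1 v2 : ℤ, 0 < v0 ∧ 0 < v1 ∧ 0 < v2 ∧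
      (v0 + v1 + v2)^2 = 8 * v0 * v1 * v2 ∧
      u0 = 2 * v0 ∧ u1 = 2 * v1 ∧ u2 = 2 * v2 := by
  have hesum : Even (u0 + u1 + u2) := by
    have h2 : Even ((u0 + u1 + u2)^2) := ⟨2 * u0 * u1 * u2, by linarith⟩
    exact (Int.even_pow.mp h2).1
  rcases Int.even_or_odd u0 with he0 | ho0 <;>
    rcases Int.even_or_odd u1 with he1 | ho1 <;>
    rcases Int.even_or_odd u2 with he2 | ho2
  · -- all even
    obtain ⟨a, ha⟩ := he0; obtain ⟨b, hb⟩ := he1; obtain ⟨c, hc⟩ := he2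
    refine ⟨a, b, c, by omega, by omega, by omega, ?_, by omega, by omega, by omega⟩
    have ha' : u0 = 2*a := by omega
    have hb' : u1 = 2*b := by omega
    have hc' : u2 = 2*c := by omega
    subst ha' hb' hc'
    linarith [heq, (by ring : ((2*a) + (2*b) + (2*c))^2 = 4*(a+b+c)^2),
      (by ring : 4*(2*a)*(2*b)*(2*c) = 4*(8*a*b*c))]
  · -- E E O : exactly one odd, sum odd
    obtain ⟨a, ha⟩ := he0; obtain ⟨b, hb⟩ := he1; obtain ⟨c, hc⟩ := ho2
    obtain ⟨t, ht⟩ := hesum; omega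
  · -- E O E : two even one odd
    obtain ⟨a, ha⟩ := he0; obtain ⟨b, hb⟩ := ho1; obtain ⟨c, hc⟩ := he2
    obtain ⟨t, ht⟩ := hesum; omega
  · -- E O O : two odd, even is u0
    exact absurd (by linear_combination heq : (u1 + u2 + u0)^2 = 4*u1*u2*u0)
      (fun h => aux_key' u1 u2 u0 h1 h2 h0 ho1 ho2 he0 h)
  · -- O E E
    obtain ⟨a, ha⟩ := ho0; obtain ⟨b, hb⟩ := he1; obtain ⟨c, hc⟩ := he2
    obtain ⟨t, ht⟩ := hesum; omega
  · -- O E O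
    exact absurd (by linear_combination heq : (u0 + u2 + u1)^2 = 4*u0*u2*u1)
      (fun h => aux_key' u0 u2 u1 h0 h2 h1 ho0 ho2 he1 h)
  · -- O O E
    exact absurd heq (fun h => aux_key' u0 u1 u2 h0 h1 h2 ho0 ho1 he2 h)
  · -- O O O : sum odd
    obtain ⟨a, ha⟩ := ho0; obtain ⟨b, hb⟩ := ho1; obtain ⟨c, hc⟩ := ho2
    obtain ⟨t, ht⟩ := hesum; omega
end

section
/- Every positive integer solution of (u0+u1+u2)^2 = 9*u0*u1*u2 with u0 ≤ u1 ≤ u2 and u2 ≤ u0+u1 equals (1,1,1). -/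
theorem initial_solution_nine (u0 u1 u2 : ℤ)
    (h0 : 0 < u0) (h1 : 0 < u1) (h2 : 0 < u2)
    (h01 : u0 ≤ u1) (h12 : u1 ≤ u2) (hinit : u2 ≤ u0 + u1)
    (heq : (u0 + u1 + u2)^2 = 9 * u0 * u1 * u2) :
    (u0, u1, u2) = (1, 1, 1) := by
  -- from s ≤ 3*u2 : u0*u1 ≤ u2
  have hs : u0 + u1 + u2 ≤ 3 * u2 := by linarith
  have hkey : u0 * u1 ≤ u2 := by nlinarith [sq_nonneg (u0 + u1 + u2), mul_pos h0 h1]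
  -- (u0-1)*(u1-1) ≤ 1
  have hprod : (u0 - 1) * (u1 - 1) ≤ 1 := by nlinarith
  have hu0 : u0 ≤ 2 := by nlinarith
  interval_cases u0
  · -- u0 = 1, u2 = u1 or u1 + 1
    have : u2 = u1 ∨ u2 = u1 + 1 := by omega
    rcases this with h | h
    · have hu1 : u1 = 1 := by nlinarith
      have hu2 : u2 = 1 := by omega
      subst hu1; subst hu2; rfl
    · subst h; exfalso; nlinarith
  · -- u0 = 2
    have hu1 : u1 = 2 := by nlinarith
    subst hu1
    have : u2 = 4 := by omega
    subst this
    exfalso; norm_num at heq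
end

section
/- Every positive integer solution of (u0+u1+u2)^2 = 8*u0*u1*u2 with u0 ≤ u1 ≤ u2 and u2 ≤ u0+u1 equals (1,1,2). -/
theorem initial_solution_eight (u0 u1 u2 : ℤ)
    (h0 : 0 < u0) (h1 : 0 < u1) (h2 : 0 < u2)
    (h01 : u0 ≤ u1) (h12 : u1 ≤ u2) (hinit : u2 ≤ u0 + u1)
    (heq : (u0 + u1 + u2)^2 = 8 * u0 * u1 * u2) :
    (u0, u1, u2) = (1, 1, 2) := by
  have hA : u0 * u1 ≤ u0 + u1 := by nlinarith [sq_nonneg (u0 + u1 - u2)]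
  have hu0 : u0 ≤ 2 := by nlinarith
  interval_cases u0
  · -- u0 = 1
    have : u2 = u1 ∨ u2 = u1 + 1 := by omega
    rcases this with h | h <;> subst h
    · exfalso
      rcases (show u2 = 1 ∨ 2 ≤ u2 by omega) with h | h
      · subst h; norm_num at heq
      · nlinarith
    · have : u1 = 1 := by nlinarith
      subst this; norm_num
  · -- u0 = 2
    have h1' : u1 = 2 := by nlinarith
    subst h1'
    exfalso
    interval_cases u2 <;> omega
end

section
/- For every positive integer solution (u0,u1,u2) of (u0+u1+u2)^2 = 9*u0*u1*u2, each entry ui is congruent to 1 modulo 3. In particular, 3 divides none of the entries. -/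
/-!
Vieta jumping. Replacing the largest entry `z` of a solution by the other root
`z' = 9xy - 2x - 2y - z = (x + y)² / z` of the equation, viewed as a quadratic in `z`, gives a
solution with `0 < z' < z` as long as `z > x + y`, and `z + z' ≡ x + y (mod 3)`. So the claim
descends to solutions with `z ≤ x + y`, and the only one of those is `(1, 1, 1)`.
-/

def IsSqMarkovTriple (a x y z : ℤ) : Prop := (x + y + z) ^ 2 = a * x * y * z

def sqMarkovMutation (a x y z : ℤ) : ℤ := a * x * y - 2 * x - 2 * y - z

theorem add_sqMarkovMutation_modEq_three {a : ℤ} (ha : 3 ∣ a) (x y z : ℤ) :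
    z + sqMarkovMutation a x y z ≡ x + y [ZMOD 3] := by
  obtain ⟨k, rfl⟩ := ha
  exact Int.modEq_iff_dvd.mpr ⟨x + y - k * x * y, by unfold sqMarkovMutation; ring⟩

namespace IsSqMarkovTriple

variable {a x y z : ℤ}

theorem swap12 (h : IsSqMarkovTriple a x y z) : IsSqMarkovTriple a y x z := by
  unfold IsSqMarkovTriple at *; linear_combination h

theorem swap13 (h : IsSqMarkovTriple a x y z) : IsSqMarkovTriple a z y x := by
  unfold IsSqMarkovTriple at *; linear_combination h

theorem swap23 (h : IsSqMarkovTriple a x y z) : IsSqMarkovTriple a x z y := by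
  unfold IsSqMarkovTriple at *; linear_combination h

theorem mutation (h : IsSqMarkovTriple a x y z) :
    IsSqMarkovTriple a x y (sqMarkovMutation a x y z) := by
  unfold IsSqMarkovTriple sqMarkovMutation at *; linear_combination h

theorem mul_mutation (h : IsSqMarkovTriple a x y z) :
    z * sqMarkovMutation a x y z = (x + y) ^ 2 := by
  unfold IsSqMarkovTriple sqMarkovMutation at *; linear_combination -h

theorem mutation_pos (h : IsSqMarkovTriple a x y z) (hx : 0 < x) (hy : 0 < y) (hz : 0 < z) :
    0 < sqMarkovMutation a x y z :=
  pos_of_mul_pos_right (h.mul_mutation ▸ by positivity) hz.le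

theorem mutation_lt (h : IsSqMarkovTriple a x y z) (hx : 0 < x) (hy : 0 < y) (hxyz : x + y < z) :
    sqMarkovMutation a x y z < z := by
  have hz : 0 < z := by linarith
  refine lt_of_mul_lt_mul_left ?_ hz.le
  rw [h.mul_mutation]
  nlinarith

theorem eq_one_of_le_add (h : IsSqMarkovTriple 9 x y z) (hx : 0 < x) (hxy : x ≤ y)
    (hyz : y ≤ z) (hz : z ≤ x + y) : x = 1 ∧ y = 1 ∧ z = 1 := by
  unfold IsSqMarkovTriple at h
  have hy : 0 < y := hx.trans_le hxy
  have hx1 : x = 1 := by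
    have hbound : 9 * x * (y * y) ≤ 16 * (y * y) := calc
      9 * x * (y * y) ≤ 9 * x * y * z := by nlinarith [mul_pos hx hy]
      _ = (x + y + z) ^ 2 := h.symm
      _ ≤ (4 * y) ^ 2 := by gcongr <;> linarith
      _ = 16 * (y * y) := by ring
    have : 9 * x ≤ 16 := le_of_mul_le_mul_right hbound (by positivity)
    omega
  subst hx1
  have hy2 : y ≤ 2 := by nlinarith
  interval_cases y <;> interval_cases z <;> simp_all

theorem emod_three_eq_one (h : IsSqMarkovTriple 9 x y z) (hx : 0 < x) (hy : 0 < y)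
    (hz : 0 < z) : x % 3 = 1 ∧ y % 3 = 1 ∧ z % 3 = 1 := by
  induction hn : (x + y + z).toNat using Nat.strong_induction_on generalizing x y z with
  | _ n ih =>
  wlog hxz : x ≤ z generalizing x y z
  · obtain ⟨hz3, hy3, hx3⟩ := this h.swap13 hz hy hx (by rw [← hn]; ring_nf) (by linarith)
    exact ⟨hx3, hy3, hz3⟩
  wlog hyz : y ≤ z generalizing x y z
  · obtain ⟨hx3, hz3, hy3⟩ :=
      this h.swap23 hx hz hy (by rw [← hn]; ring_nf) (by linarith) (by linarith)
    exact ⟨hx3, hy3, hz3⟩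
  wlog hxy : x ≤ y generalizing x y z
  · obtain ⟨hy3, hx3, hz3⟩ :=
      this h.swap12 hy hx hz (by rw [← hn]; ring_nf) hyz hxz (by linarith)
    exact ⟨hx3, hy3, hz3⟩
  rcases le_or_gt z (x + y) with hbase | hdesc
  · obtain ⟨rfl, rfl, rfl⟩ := h.eq_one_of_le_add hx hxy hyz hbase
    norm_num
  · have hlt := h.mutation_lt hx hy hdesc
    obtain ⟨hx3, hy3, hz'3⟩ :=
      ih _ (by omega) h.mutation hx hy (h.mutation_pos hx hy hz) rfl
    have hsum := add_sqMarkovMutation_modEq_three (by norm_num : (3 : ℤ) ∣ 9) x y z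
    rw [Int.ModEq] at hsum
    exact ⟨hx3, hy3, by omega⟩

end IsSqMarkovTriple

theorem solutions_nine_mod_three (u0 u1 u2 : ℤ)
    (h0 : 0 < u0) (h1 : 0 < u1) (h2 : 0 < u2)
    (heq : (u0 + u1 + u2)^2 = 9 * u0 * u1 * u2) :
    (u0 % 3 = 1 ∧ u1 % 3 = 1 ∧ u2 % 3 = 1) ∧
    (¬ (3 ∣ u0) ∧ ¬ (3 ∣ u1) ∧ ¬ (3 ∣ u2)) := by
  have hmod : u0 % 3 = 1 ∧ u1 % 3 = 1 ∧ u2 % 3 = 1 :=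
    IsSqMarkovTriple.emod_three_eq_one heq h0 h1 h2
  exact ⟨hmod, by omega, by omega, by omega⟩
end

section
/- For every positive integer solution (u0,u1,u2) of (u0+u1+u2)^2 = 8*u0*u1*u2 whose entries satisfy: 2 divides u2, then (u0 mod 8, u1 mod 8, u2 mod 8) = (1, 1, 2). -/
/-- The possible residue patterns mod 8 for a solution triple. -/
def MarkovD (x y z : ℤ) : Prop :=
  (x % 8 = 1 ∧ y % 8 = 1 ∧ z % 8 = 2) ∨ (x % 8 = 1 ∧ y % 8 = 2 ∧ z % 8 = 1) ∨
    (x % 8 = 2 ∧ y % 8 = 1 ∧ z % 8 = 1)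

/-- The key Vieta-descent step, assuming `x ≤ y ≤ z`. -/
lemma markov_core (x y z : ℤ) (hx : 0 < x) (hy : 0 < y) (hz : 0 < z)
    (hxy : x ≤ y) (hyz : y ≤ z)
    (heq : (x + y + z)^2 = 8 * x * y * z)
    (IH : ∀ a b c : ℤ, 0 < a → 0 < b → 0 < c → (a + b + c)^2 = 8 * a * b * c →
      a + b + c < x + y + z → MarkovD a b c) : MarkovD x y z := by
  have hzw : z * (8 * (x * y) - 2 * x - 2 * y - z) = (x + y) ^ 2 := by
    linear_combination -heq
  rcases lt_or_ge (8 * (x * y) - 2 * x - 2 * y - z) z with hlt | hge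
  · -- descent case
    have hwpos : 0 < 8 * (x * y) - 2 * x - 2 * y - z := by
      nlinarith [hzw, hz, mul_pos (show (0:ℤ) < x + y by linarith)
        (show (0:ℤ) < x + y by linarith)]
    have heqw : (x + y + (8 * (x * y) - 2 * x - 2 * y - z))^2
        = 8 * x * y * (8 * (x * y) - 2 * x - 2 * y - z) := by
      linear_combination heq
    have hD := IH x y (8 * (x * y) - 2 * x - 2 * y - z) hx hy hwpos heqw (by linarith)
    have hrel : z = 8 * (x * y) - 2 * x - 2 * y - (8 * (x * y) - 2 * x - 2 * y - z) := by
      ring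
    unfold MarkovD at hD ⊢
    generalize hgen : x * y = k at hD hrel
    omega
  · -- base case: the only possibility is (1,1,2)
    have hfy0 : 0 ≤ (y - z) * (y - (8 * (x * y) - 2 * x - 2 * y - z)) := by
      have h := mul_nonneg (show (0:ℤ) ≤ z - y by linarith)
        (show (0:ℤ) ≤ (8 * (x * y) - 2 * x - 2 * y - z) - y by linarith)
      nlinarith [h]
    have hid : (y - z) * (y - (8 * (x * y) - 2 * x - 2 * y - z))
        = x ^ 2 + 4 * (x * y) + 4 * y ^ 2 - 8 * (x * y ^ 2) := by
      linear_combination -heq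
    have hfy' : 0 ≤ x ^ 2 + 4 * (x * y) + 4 * y ^ 2 - 8 * (x * y ^ 2) := hid ▸ hfy0
    have hx1 : x = 1 := by
      have hxle : x ≤ 1 := by
        nlinarith [hfy', mul_pos hy hy, mul_le_mul_of_nonneg_right hxy hy.le,
          mul_pos hx hy]
      omega
    subst hx1
    have hy1 : y = 1 := by
      have hyle : y ≤ 1 := by nlinarith [hfy']
      omega
    subst hy1
    have hz2 : z = 2 := by
      have h : (z - 2) ^ 2 = 0 := by linear_combination heq
      have := sq_eq_zero_iff.mp h
      omega
    subst hz2
    left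
    norm_num

lemma markov_main : ∀ n : ℕ, ∀ x y z : ℤ, 0 < x → 0 < y → 0 < z →
    (x + y + z)^2 = 8 * x * y * z → x + y + z = n → MarkovD x y z := by
  intro n
  induction n using Nat.strong_induction_on with
  | _ n IH =>
    intro x y z hx hy hz heq hsum
    have IH' : ∀ a b c : ℤ, 0 < a → 0 < b → 0 < c → (a + b + c)^2 = 8 * a * b * c →
        a + b + c < x + y + z → MarkovD a b c := by
      intro a b c ha hb hc heq' hlt
      exact IH (a + b + c).toNat (by omega) a b c ha hb hc heq' (by omega)
    rcases le_total x y with h1 | h1 <;> rcases le_total y z with h2 | h2 <;>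
      rcases le_total x z with h3 | h3
    · exact markov_core x y z hx hy hz h1 h2 heq IH'
    · exact markov_core x y z hx hy hz h1 h2 heq IH'
    · have := markov_core x z y hx hz hy h3 h2 (by linear_combination heq)
        (fun a b c ha hb hc he hl => IH' a b c ha hb hc he (by linarith))
      unfold MarkovD at this ⊢; tauto
    · have := markov_core z x y hz hx hy h3 h1 (by linear_combination heq)
        (fun a b c ha hb hc he hl => IH' a b c ha hb hc he (by linarith))
      unfold MarkovD at this ⊢; tauto
    · have := markov_core y x z hy hx hz h1 h3 (by linear_combination heq)
        (fun a b c ha hb hc he hl => IH' a b c ha hb hc he (by linarith))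
      unfold MarkovD at this ⊢; tauto
    · have := markov_core y z x hy hz hx h2 h3 (by linear_combination heq)
        (fun a b c ha hb hc he hl => IH' a b c ha hb hc he (by linarith))
      unfold MarkovD at this ⊢; tauto
    · have := markov_core z y x hz hy hx h2 h1 (by linear_combination heq)
        (fun a b c ha hb hc he hl => IH' a b c ha hb hc he (by linarith))
      unfold MarkovD at this ⊢; tauto
    · have := markov_core z y x hz hy hx h2 h1 (by linear_combination heq)
        (fun a b c ha hb hc he hl => IH' a b c ha hb hc he (by linarith))
      unfold MarkovD at this ⊢; tauto

theorem solutions_eight_mod_eight (u0 u1 u2 : ℤ)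
    (h0 : 0 < u0) (h1 : 0 < u1) (h2 : 0 < u2)
    (hdvd : 2 ∣ u2)
    (heq : (u0 + u1 + u2)^2 = 8 * u0 * u1 * u2) :
    u0 % 8 = 1 ∧ u1 % 8 = 1 ∧ u2 % 8 = 2 := by
  have hD := markov_main (u0 + u1 + u2).toNat u0 u1 u2 h0 h1 h2 heq (by omega)
  unfold MarkovD at hD
  omega
end

section
/- For every adjusted positive integer solution (u0,u1,u2) of (u0+u1+u2)^2 = 6*u0*u1*u2 (meaning 2 divides u1 and 3 divides u2), one has (u0 mod 6, u1 mod 6, u2 mod 6) = (1, 2, 3). -/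
set_option maxHeartbeats 1000000

def MarkovP (x y z : ℤ) : Prop :=
  (x % 6 = 1 ∧ y % 6 = 2 ∧ z % 6 = 3) ∨ (x % 6 = 1 ∧ y % 6 = 3 ∧ z % 6 = 2) ∨
  (x % 6 = 2 ∧ y % 6 = 1 ∧ z % 6 = 3) ∨ (x % 6 = 2 ∧ y % 6 = 3 ∧ z % 6 = 1) ∨
  (x % 6 = 3 ∧ y % 6 = 1 ∧ z % 6 = 2) ∨ (x % 6 = 3 ∧ y % 6 = 2 ∧ z % 6 = 1)

lemma markov_transfer (a b c c' t : ℤ) (ht : c = 6*t - 2*a - 2*b - c')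
    (hP : MarkovP a b c') : MarkovP a b c := by
  unfold MarkovP at *
  rcases hP with ⟨h1,h2,h3⟩|⟨h1,h2,h3⟩|⟨h1,h2,h3⟩|⟨h1,h2,h3⟩|⟨h1,h2,h3⟩|⟨h1,h2,h3⟩ <;> omega

lemma markov_swap12 (x y z : ℤ) (h : MarkovP y x z) : MarkovP x y z := by
  unfold MarkovP at *; tauto

lemma markov_swap23 (x y z : ℤ) (h : MarkovP x z y) : MarkovP x y z := by
  unfold MarkovP at *; tauto

lemma markov_rot (x y z : ℤ) (h : MarkovP y z x) : MarkovP x y z := by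
  unfold MarkovP at *; tauto

lemma markov_rot' (x y z : ℤ) (h : MarkovP z x y) : MarkovP x y z := by
  unfold MarkovP at *; tauto

lemma markov_swap13 (x y z : ℤ) (h : MarkovP z y x) : MarkovP x y z := by
  unfold MarkovP at *; tauto

lemma markov_aux : ∀ n : ℕ, ∀ x y z : ℤ, 0 < x → 0 < y → 0 < z →
    (x + y + z).toNat ≤ n → (x + y + z)^2 = 6 * x * y * z → MarkovP x y z := by
  intro n
  induction n with
  | zero =>
    intro x y z hx hy hz hn _
    exfalso; omega
  | succ n ih =>
    intro x y z hx hy hz hn heq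
    have key : ∀ a b c : ℤ, 0 < a → 0 < b → 0 < c → a ≤ b → b ≤ c →
        a + b + c = x + y + z → (a + b + c)^2 = 6 * a * b * c → MarkovP a b c := by
      intro a b c ha hb hc hab hbc hsum habc
      obtain ⟨c', hc'def⟩ : ∃ c' : ℤ, c' = 6*a*b - 2*a - 2*b - c := ⟨_, rfl⟩
      have hcc' : c * c' = (a + b)^2 := by
        rw [hc'def]; linear_combination -habc
      have heq' : (a + b + c')^2 = 6 * a * b * c' := by
        rw [hc'def]; linear_combination habc
      have hc'pos : 0 < c' := by
        by_contra h
        push_neg at h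
        have h1 : c * c' ≤ 0 := mul_nonpos_of_nonneg_of_nonpos hc.le h
        have h2 : 0 < (a + b)^2 := by positivity
        linarith [hcc']
      rcases lt_or_ge c' c with hlt | hle
      · -- descent
        have hP := ih a b c' ha hb hc'pos (by omega) heq'
        exact markov_transfer a b c c' (a*b) (by linarith [hc'def]) hP
      · -- base case
        have hcab : c ≤ a + b := by
          have h1 : c * c ≤ c * c' := mul_le_mul_of_nonneg_left hle hc.le
          nlinarith [hcc']
        have h3c : a + b + c ≤ 3 * c := by linarith
        have habs : 2*(a*b)*(a+b+c) ≤ 6*a*b*c := by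
          nlinarith [mul_nonneg (mul_pos ha hb).le (by linarith : (0:ℤ) ≤ 3*c - (a+b+c))]
        have hspos : 0 < a + b + c := by linarith
        have hs2ab : 2*(a*b) ≤ a + b + c := by
          have h1 : 2*(a*b)*(a+b+c) ≤ (a+b+c)*(a+b+c) := by nlinarith
          exact le_of_mul_le_mul_right h1 hspos
        have hab_le : a*b ≤ a + b := by linarith
        have h4 : a*b - 2*b ≤ 0 := by linarith
        have ha2 : a ≤ 2 := by nlinarith
        interval_cases a
        · -- a = 1
          have hc2 : c = b ∨ c = b + 1 := by omega
          rcases hc2 with hcb | hcb <;> rw [hcb] at habc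
          · exfalso
            have h : 2*(b*b) = 4*b + 1 := by linear_combination -habc
            generalize b*b = t at h
            omega
          · have h : 2*((b-2)*(b+1)) = 0 := by linear_combination -habc
            have h' : (b-2)*(b+1) = 0 := by linarith
            rcases mul_eq_zero.mp h' with h'' | h''
            · have hb2 : b = 2 := by omega
              have hc3 : c = 3 := by omega
              subst hb2; subst hc3
              unfold MarkovP
              norm_num
            · exfalso; omega
        · -- a = 2
          have hb2 : b = 2 := by omega
          subst hb2
          have hc4 : c ≤ 4 := hcab
          interval_cases c <;> norm_num at habc
    rcases le_total x y with hxy | hxy <;> rcases le_total y z with hyz | hyz <;>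
      rcases le_total x z with hxz | hxz
    · exact key x y z hx hy hz hxy hyz (by ring) heq
    · exact key x y z hx hy hz hxy hyz (by ring) heq
    · exact markov_swap23 _ _ _ (key x z y hx hz hy hxz hyz (by ring) (by linear_combination heq))
    · exact markov_rot' _ _ _ (key z x y hz hx hy (by linarith) hxy (by ring) (by linear_combination heq))
    · exact markov_swap12 _ _ _ (key y x z hy hx hz hxy hxz (by ring) (by linear_combination heq))
    · exact markov_rot _ _ _ (key y z x hy hz hx hyz hxz (by ring) (by linear_combination heq))
    · exact markov_swap12 _ _ _ (key y x z hy hx hz hxy hxz (by ring) (by linear_combination heq))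
    · exact markov_swap13 _ _ _ (key z y x hz hy hx hyz hxy (by ring) (by linear_combination heq))

theorem solutions_six_mod_six (u0 u1 u2 : ℤ)
    (h0 : 0 < u0) (h1 : 0 < u1) (h2 : 0 < u2)
    (hdvd1 : 2 ∣ u1) (hdvd2 : 3 ∣ u2)
    (heq : (u0 + u1 + u2)^2 = 6 * u0 * u1 * u2) :
    u0 % 6 = 1 ∧ u1 % 6 = 2 ∧ u2 % 6 = 3 := by
  have hP := markov_aux (u0 + u1 + u2).toNat u0 u1 u2 h0 h1 h2 (le_refl _) heq
  obtain ⟨k, hk⟩ := hdvd1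
  obtain ⟨j, hj⟩ := hdvd2
  unfold MarkovP at hP
  rcases hP with ⟨a1,a2,a3⟩|⟨a1,a2,a3⟩|⟨a1,a2,a3⟩|⟨a1,a2,a3⟩|⟨a1,a2,a3⟩|⟨a1,a2,a3⟩ <;> omega
end

section
/- For every adjusted positive integer solution (u0,u1,u2) of (u0+u1+u2)^2 = 5*u0*u1*u2 (meaning u0 ≤ u1 and 5 divides u2), the pair of residues (u0 mod 5, u1 mod 5) is either (1,4) or (4,1), and u2 ≡ 0 mod 5. -/
/-- The residues mod 5 of the triple form a permutation of (0,1,4). -/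
abbrev QRes (a b c : ℤ) : Prop :=
  (a % 5 = 0 ∧ b % 5 = 1 ∧ c % 5 = 4) ∨ (a % 5 = 0 ∧ b % 5 = 4 ∧ c % 5 = 1) ∨
  (a % 5 = 1 ∧ b % 5 = 0 ∧ c % 5 = 4) ∨ (a % 5 = 1 ∧ b % 5 = 4 ∧ c % 5 = 0) ∨
  (a % 5 = 4 ∧ b % 5 = 0 ∧ c % 5 = 1) ∨ (a % 5 = 4 ∧ b % 5 = 1 ∧ c % 5 = 0)

set_option maxHeartbeats 2000000 in
lemma qres_step (x y z w : ℤ) (hdiv : (5:ℤ) ∣ z + w + 2*x + 2*y)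
    (hQ : QRes w x y ∨ QRes x w y ∨ QRes x y w) : QRes x y z := by
  obtain ⟨k, hk⟩ := hdiv
  rcases hQ with (⟨ha,hb,hc⟩|⟨ha,hb,hc⟩|⟨ha,hb,hc⟩|⟨ha,hb,hc⟩|⟨ha,hb,hc⟩|⟨ha,hb,hc⟩) |
    (⟨ha,hb,hc⟩|⟨ha,hb,hc⟩|⟨ha,hb,hc⟩|⟨ha,hb,hc⟩|⟨ha,hb,hc⟩|⟨ha,hb,hc⟩) |
    (⟨ha,hb,hc⟩|⟨ha,hb,hc⟩|⟨ha,hb,hc⟩|⟨ha,hb,hc⟩|⟨ha,hb,hc⟩|⟨ha,hb,hc⟩) <;>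
    omega

set_option maxHeartbeats 1000000 in
lemma key_descent : ∀ n : ℕ, ∀ x y z : ℤ, 0 < x → x ≤ y → y ≤ z →
    (x + y + z)^2 = 5 * x * y * z → x + y + z ≤ (n : ℤ) → QRes x y z := by
  intro n
  induction n with
  | zero =>
    intro x y z hx hxy hyz heq hn
    exfalso; omega
  | succ n ih =>
    intro x y z hx hxy hyz heq hn
    have hy : 0 < y := lt_of_lt_of_le hx hxy
    have hz : 0 < z := lt_of_lt_of_le hy hyz
    set w : ℤ := 5*x*y - 2*x - 2*y - z with hw
    clear_value w
    have hzw : z * w = (x + y)^2 := by linear_combination z * hw - heq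
    have hwpos : 0 < w := by nlinarith [sq_nonneg (x + y)]
    have heqw : (x + y + w)^2 = 5 * x * y * w := by
      linear_combination heq + (w - z) * hw
    have hdiv : (5:ℤ) ∣ z + w + 2*x + 2*y := ⟨x * y, by linear_combination hw⟩
    rcases le_or_gt z w with hge | hlt
    · -- base case: z ≤ w, so z ≤ x + y, bounded region
      have hzxy : z ≤ x + y := by nlinarith
      have hx3 : x ≤ 3 := by nlinarith
      have hy27 : y ≤ 27 := by nlinarith
      have hx1 : (1:ℤ) ≤ x := hx
      clear hzw heqw hdiv hge hw hn
      interval_cases x <;> interval_cases y <;> interval_cases z <;>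
        first
          | (exfalso; revert heq; decide)
          | decide
    · -- descent case
      have hsum : x + y + w ≤ (n : ℤ) := by omega
      apply qres_step x y z w hdiv
      rcases le_total w x with h1 | h1
      · exact Or.inl (ih w x y hwpos h1 hxy (by linear_combination heqw) (by omega))
      · rcases le_total w y with h2 | h2
        · exact Or.inr (Or.inl
            (ih x w y hx h1 h2 (by linear_combination heqw) (by omega)))
        · exact Or.inr (Or.inr (ih x y w hx hxy h2 heqw hsum))

theorem solutions_five_mod_five (u0 u1 u2 : ℤ)
    (h0 : 0 < u0) (h1 : 0 < u1) (h2 : 0 < u2)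
    (h01 : u0 ≤ u1) (hdvd : 5 ∣ u2)
    (heq : (u0 + u1 + u2)^2 = 5 * u0 * u1 * u2) :
    ((u0 % 5, u1 % 5) = (1, 4) ∨ (u0 % 5, u1 % 5) = (4, 1)) ∧
    u2 % 5 = 0 := by
  simp only [Prod.mk.injEq]
  obtain ⟨k, hk⟩ := hdvd
  rcases le_total u2 u0 with h | h
  · have hQ := key_descent (u0 + u1 + u2).toNat u2 u0 u1 h2 h h01
      (by linear_combination heq) (by omega)
    rcases hQ with ⟨ha,hb,hc⟩|⟨ha,hb,hc⟩|⟨ha,hb,hc⟩|⟨ha,hb,hc⟩|⟨ha,hb,hc⟩|⟨ha,hb,hc⟩ <;>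
      omega
  · rcases le_total u2 u1 with h' | h'
    · have hQ := key_descent (u0 + u1 + u2).toNat u0 u2 u1 h0 h h'
        (by linear_combination heq) (by omega)
      rcases hQ with ⟨ha,hb,hc⟩|⟨ha,hb,hc⟩|⟨ha,hb,hc⟩|⟨ha,hb,hc⟩|⟨ha,hb,hc⟩|⟨ha,hb,hc⟩ <;>
        omega
    · have hQ := key_descent (u0 + u1 + u2).toNat u0 u1 u2 h0 h01 h'
        (by linear_combination heq) (by omega)
      rcases hQ with ⟨ha,hb,hc⟩|⟨ha,hb,hc⟩|⟨ha,hb,hc⟩|⟨ha,hb,hc⟩|⟨ha,hb,hc⟩|⟨ha,hb,hc⟩ <;>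
        omega
end
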